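/- In a left adequate semigroup S, if e and f are idempotents with ef = f, then for every a ∈ S, (ae)^+ (af)^+ = (af)^+. -/

import Mathlib

/-! Since `a⁺ a = a`, also `a⁺ (ac) = ac`, and `𝓡*`-relatedness of `ac` with `(ac)⁺` transfers
this left identity to `a⁺ (ac)⁺ = (ac)⁺`. The theorem is the case `a := ae`, `c := f`, as
`af = (ae)f`. -/

/-- `a 𝓡* b` in a semigroup `S`: for all `x, y ∈ S¹`, `xa = ya ↔ xb = yb`. -/
def RStar {S : Type*} [Semigroup S] (a b : S) : Prop :=
  ∀ x y : WithOne S, x * (a : WithOne S) = y * (a : WithOne S) ↔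
    x * (b : WithOne S) = y * (b : WithOne S)

/-- `S` with unary operation `p` is a left adequate semigroup: idempotents commute,
each `p a` is an idempotent, and `p a` is the (unique) idempotent `𝓡*`-related to `a`. -/
def IsLeftAdequatePlus {S : Type*} [Semigroup S] (p : S → S) : Prop :=
  (∀ e f : S, e * e = e → f * f = f → e * f = f * e) ∧
  (∀ a : S, p a * p a = p a) ∧
  (∀ a : S, RStar a (p a))

section

variable {S : Type*} [Semigroup S]

theorem RStar.symm {a b : S} (hab : RStar a b) : RStar b a :=
  fun x y => (hab x y).symm

theorem RStar.mul_eq_of_mul_eq {a b : S} (hab : RStar a b) {x : S} (hx : x * a = a) :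
    x * b = b := by
  have key : (x : WithOne S) * b = 1 * b :=
    (hab x 1).mp (by rw [one_mul, ← WithOne.coe_mul, hx])
  rwa [one_mul, ← WithOne.coe_mul, WithOne.coe_inj] at key

namespace IsLeftAdequatePlus

variable {p : S → S}

theorem plus_mul_self (h : IsLeftAdequatePlus p) (a : S) : p a * a = a :=
  (h.2.2 a).symm.mul_eq_of_mul_eq (h.2.1 a)

theorem plus_mul_plus_mul (h : IsLeftAdequatePlus p) (a c : S) :
    p a * p (a * c) = p (a * c) := by
  have hac : p a * (a * c) = a * c := by rw [← mul_assoc, h.plus_mul_self]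
  exact (h.2.2 (a * c)).mul_eq_of_mul_eq hac

end IsLeftAdequatePlus

end

theorem plus_absorb_of_idem_general {S : Type*} [Semigroup S] (p : S → S)
    (h : IsLeftAdequatePlus p) (e f a : S)
    (hef : e * f = f) : p (a * e) * p (a * f) = p (a * f) := by
  have haf : a * f = a * e * f := by rw [mul_assoc, hef]
  rw [haf]
  exact h.plus_mul_plus_mul (a * e) f

/-- In a left adequate semigroup, if `e`, `f` are idempotents with `ef = f`, then
`(ae)⁺ (af)⁺ = (af)⁺` for every `a`. -/
theorem plus_absorb_of_idem {S : Type*} [Semigroup S] (p : S → S)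
    (h : IsLeftAdequatePlus p) (e f a : S) (he : e * e = e) (hf : f * f = f)
    (hef : e * f = f) : p (a * e) * p (a * f) = p (a * f) :=
  plus_absorb_of_idem_general p h e f a hef
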